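/- arXiv:2311.15143 — 4 statements merged into one kernel-verified Lean document; each statement's English description precedes it below -/
import Mathlib

section
/- Let A and B be symmetric negative semi-definite r×r real matrices. Then for any r×r matrix C, the Sylvester equation (I - A)S - SB = C has a unique solution S, and the solution satisfies ‖S‖_F ≤ ‖C‖_F. -/
open Matrix

noncomputable def frobNorm {m n : Type*} [Fintype m] [Fintype n] (M : Matrix m n ℝ) : ℝ :=
  Real.sqrt (∑ i, ∑ j, (M i j) ^ 2)

noncomputable def sylvMap {r : ℕ} (A B : Matrix (Fin r) (Fin r) ℝ) :
    Matrix (Fin r) (Fin r) ℝ →ₗ[ℝ] Matrix (Fin r) (Fin r) ℝ where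
  toFun S := (1 - A) * S - S * B
  map_add' X Y := by noncomm_ring
  map_smul' c X := by
    simp only [RingHom.id_apply]
    rw [Matrix.mul_smul, Matrix.smul_mul, smul_sub]

lemma sylv_key {r : ℕ} (A B : Matrix (Fin r) (Fin r) ℝ) (hBsymm : B.IsSymm)
    (hAnsd : ∀ x : Fin r → ℝ, x ⬝ᵥ A.mulVec x ≤ 0)
    (hBnsd : ∀ x : Fin r → ℝ, x ⬝ᵥ B.mulVec x ≤ 0)
    (S : Matrix (Fin r) (Fin r) ℝ) :
    ∑ i, ∑ j, S i j ^ 2 ≤ ∑ i, ∑ j, S i j * ((1 - A) * S - S * B) i j := by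
  have expand : ∑ i, ∑ j, S i j * ((1 - A) * S - S * B) i j
      = (∑ i, ∑ j, S i j ^ 2) - (∑ i, ∑ j, S i j * (A * S) i j)
        - (∑ i, ∑ j, S i j * (S * B) i j) := by
    simp only [Matrix.sub_apply, Matrix.sub_mul, Matrix.one_mul]
    rw [← Finset.sum_sub_distrib, ← Finset.sum_sub_distrib]
    congr 1; ext i
    rw [← Finset.sum_sub_distrib, ← Finset.sum_sub_distrib]
    congr 1; ext j
    ring
  have hA : ∑ i, ∑ j, S i j * (A * S) i j ≤ 0 := by
    rw [Finset.sum_comm]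
    apply Finset.sum_nonpos
    intro j _
    have : ∑ i, S i j * (A * S) i j = (fun i => S i j) ⬝ᵥ A.mulVec (fun i => S i j) := by
      simp [dotProduct, Matrix.mulVec, Matrix.mul_apply, dotProduct]
    rw [this]
    exact hAnsd _
  have hB : ∑ i, ∑ j, S i j * (S * B) i j ≤ 0 := by
    apply Finset.sum_nonpos
    intro i _
    have : ∑ j, S i j * (S * B) i j = (S i) ⬝ᵥ B.mulVec (S i) := by
      simp only [dotProduct, Matrix.mulVec, Matrix.mul_apply, dotProduct,
        Finset.mul_sum, Finset.sum_mul]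
      rw [Finset.sum_comm]
      apply Finset.sum_congr rfl; intro k _
      apply Finset.sum_congr rfl; intro j _
      have hbs : B k j = B j k := by
        simpa using congrFun (congrFun hBsymm j) k
      rw [hbs]; ring
    rw [this]
    exact hBnsd _
  rw [expand]
  linarith

theorem stmt_2 {r : ℕ} (A B : Matrix (Fin r) (Fin r) ℝ)
    (hAsymm : A.IsSymm) (hBsymm : B.IsSymm)
    (hAnsd : ∀ x : Fin r → ℝ, x ⬝ᵥ A.mulVec x ≤ 0)
    (hBnsd : ∀ x : Fin r → ℝ, x ⬝ᵥ B.mulVec x ≤ 0)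
    (C : Matrix (Fin r) (Fin r) ℝ) :
    (∃! S : Matrix (Fin r) (Fin r) ℝ, (1 - A) * S - S * B = C) ∧
      ∀ S : Matrix (Fin r) (Fin r) ℝ, (1 - A) * S - S * B = C →
        frobNorm S ≤ frobNorm C := by
  have hinj : Function.Injective (sylvMap A B) := by
    rw [injective_iff_map_eq_zero]
    intro S hS
    have hS' : (1 - A) * S - S * B = 0 := hS
    have key := sylv_key A B hBsymm hAnsd hBnsd S
    rw [hS'] at key
    simp only [Matrix.zero_apply, mul_zero, Finset.sum_const_zero] at key
    have hzero : ∑ i, ∑ j, S i j ^ 2 = 0 := le_antisymm key (by positivity)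
    ext i j
    have h1 : ∀ i ∈ Finset.univ, (0:ℝ) ≤ ∑ j, S i j ^ 2 := fun _ _ => by positivity
    have h2 := (Finset.sum_eq_zero_iff_of_nonneg h1).mp hzero i (Finset.mem_univ i)
    have h3 := (Finset.sum_eq_zero_iff_of_nonneg (fun _ _ => sq_nonneg _)).mp h2 j
      (Finset.mem_univ j)
    simpa using pow_eq_zero_iff (n := 2) (by norm_num) |>.mp h3
  have hsurj : Function.Surjective (sylvMap A B) :=
    LinearMap.injective_iff_surjective.mp hinj
  have hbound : ∀ S : Matrix (Fin r) (Fin r) ℝ, (1 - A) * S - S * B = C →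
      frobNorm S ≤ frobNorm C := by
    intro S hS
    have key := sylv_key A B hBsymm hAnsd hBnsd S
    rw [hS] at key
    set a := ∑ i, ∑ j, S i j ^ 2 with ha
    set b := ∑ i, ∑ j, C i j ^ 2 with hb
    have ha0 : 0 ≤ a := by positivity
    have hb0 : 0 ≤ b := by positivity
    have hcs : (∑ i, ∑ j, S i j * C i j) ^ 2 ≤ a * b := by
      have := Finset.sum_mul_sq_le_sq_mul_sq Finset.univ
        (fun p : Fin r × Fin r => S p.1 p.2) (fun p : Fin r × Fin r => C p.1 p.2)
      simpa [Fintype.sum_prod_type, ha, hb] using this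
    have hsc0 : 0 ≤ ∑ i, ∑ j, S i j * C i j := le_trans ha0 key
    have hab : a ^ 2 ≤ a * b := le_trans (by nlinarith) hcs
    have hale : a ≤ b := by
      rcases eq_or_lt_of_le ha0 with h | h
      · exact h ▸ hb0
      · nlinarith
    unfold frobNorm
    exact Real.sqrt_le_sqrt hale
  refine ⟨?_, hbound⟩
  obtain ⟨S, hS⟩ := hsurj C
  exact ⟨S, hS, fun T hT => hinj (hT.trans hS.symm)⟩
end

section
/- (Unconditional L² stability of the projected backward Euler step.) Let F_x and F_y be symmetric negative semi-definite N×N matrices, V_x, V_y ∈ ℝ^{N×r} matrices with orthonormal columns, Δt > 0, and U^n ∈ ℝ^{N×N}. Then the Sylvester equation (I - Δt V_xᵀ F_x V_x) S - S (Δt V_yᵀ F_y V_y) = V_xᵀ U^n V_y has a unique solution S ∈ ℝ^{r×r}, and ‖S‖_F ≤ ‖U^n‖_F. -/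
open Matrix

namespace FrobAux

def sumSq {m n : Type*} [Fintype m] [Fintype n] (M : Matrix m n ℝ) : ℝ :=
  ∑ i, ∑ j, (M i j) ^ 2

lemma sumSq_nonneg {m n : Type*} [Fintype m] [Fintype n] (M : Matrix m n ℝ) :
    0 ≤ sumSq M := by
  apply Finset.sum_nonneg; intro i _
  apply Finset.sum_nonneg; intro j _
  positivity

lemma frobNorm_eq {m n : Type*} [Fintype m] [Fintype n] (M : Matrix m n ℝ) :
    frobNorm M = Real.sqrt (sumSq M) := rfl

lemma sumSq_eq_trace {m n : Type*} [Fintype m] [Fintype n] [DecidableEq n]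
    (M : Matrix m n ℝ) : sumSq M = Matrix.trace (Mᵀ * M) := by
  simp only [sumSq, Matrix.trace, Matrix.diag, Matrix.mul_apply, Matrix.transpose_apply, sq]
  exact Finset.sum_comm

lemma sumSq_transpose {m n : Type*} [Fintype m] [Fintype n] (M : Matrix m n ℝ) :
    sumSq Mᵀ = sumSq M := by
  simp only [sumSq, Matrix.transpose_apply]
  exact Finset.sum_comm

lemma trace_quad_left {r m : ℕ} (A : Matrix (Fin r) (Fin r) ℝ)
    (hA : ∀ x : Fin r → ℝ, x ⬝ᵥ A.mulVec x ≤ 0) (S : Matrix (Fin r) (Fin m) ℝ) :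
    Matrix.trace (Sᵀ * (A * S)) ≤ 0 := by
  have h : Matrix.trace (Sᵀ * (A * S))
      = ∑ j, (fun i => S i j) ⬝ᵥ A.mulVec (fun i => S i j) := by
    simp only [Matrix.trace, Matrix.diag, Matrix.mul_apply, Matrix.transpose_apply,
      dotProduct, Matrix.mulVec]
  rw [h]
  exact Finset.sum_nonpos fun j _ => hA _

lemma trace_quad_right {r m : ℕ} (B : Matrix (Fin r) (Fin r) ℝ)
    (hB : ∀ x : Fin r → ℝ, x ⬝ᵥ B.mulVec x ≤ 0) (S : Matrix (Fin m) (Fin r) ℝ) :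
    Matrix.trace (Sᵀ * (S * B)) ≤ 0 := by
  have h : Matrix.trace (Sᵀ * (S * B)) = Matrix.trace (Sᵀᵀ * (B * Sᵀ)) := by
    rw [← Matrix.mul_assoc, Matrix.trace_mul_comm, ← Matrix.mul_assoc,
      Matrix.trace_mul_comm, Matrix.transpose_transpose]
  rw [h]
  exact trace_quad_left B hB Sᵀ

/-- quadratic form transfer -/
lemma quad_transfer {N r : ℕ} (F : Matrix (Fin N) (Fin N) ℝ)
    (hF : ∀ x : Fin N → ℝ, x ⬝ᵥ F.mulVec x ≤ 0) (V : Matrix (Fin N) (Fin r) ℝ) :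
    ∀ x : Fin r → ℝ, x ⬝ᵥ (Vᵀ * F * V).mulVec x ≤ 0 := by
  intro x
  have h : (Vᵀ * F * V).mulVec x = Vᵀ.mulVec (F.mulVec (V.mulVec x)) := by
    rw [← Matrix.mulVec_mulVec, ← Matrix.mulVec_mulVec]
  rw [h, Matrix.dotProduct_mulVec, Matrix.vecMul_transpose]
  exact hF _

/-- projection inequality: multiplying on the left by `Wᵀ` (orthonormal columns) decreases
the Frobenius sum of squares. -/
lemma proj_left {N r m : ℕ} (W : Matrix (Fin N) (Fin r) ℝ) (hW : Wᵀ * W = 1)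
    (Z : Matrix (Fin N) (Fin m) ℝ) : sumSq (Wᵀ * Z) ≤ sumSq Z := by
  set P : Matrix (Fin N) (Fin N) ℝ := W * Wᵀ with hP
  have hPsymm : Pᵀ = P := by rw [hP, Matrix.transpose_mul, Matrix.transpose_transpose]
  have hPP : P * P = P := by
    rw [hP, Matrix.mul_assoc, ← Matrix.mul_assoc Wᵀ W Wᵀ, hW, Matrix.one_mul]
  have key : Zᵀ * Z - (Wᵀ * Z)ᵀ * (Wᵀ * Z) = ((1 - P) * Z)ᵀ * ((1 - P) * Z) := by
    rw [Matrix.transpose_mul, Matrix.transpose_mul, Matrix.transpose_transpose,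
      Matrix.transpose_sub, Matrix.transpose_one, hPsymm]
    simp only [Matrix.sub_mul, Matrix.mul_sub, Matrix.one_mul, Matrix.mul_one,
      Matrix.mul_assoc]
    rw [← Matrix.mul_assoc P P Z, hPP, ← Matrix.mul_assoc W Wᵀ Z, ← hP]
    abel
  have h1 : sumSq Z - sumSq (Wᵀ * Z) = sumSq ((1 - P) * Z) := by
    rw [sumSq_eq_trace, sumSq_eq_trace, sumSq_eq_trace, ← Matrix.trace_sub, key]
  linarith [sumSq_nonneg ((1 - P) * Z)]

lemma proj_right {N r m : ℕ} (W : Matrix (Fin N) (Fin r) ℝ) (hW : Wᵀ * W = 1)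
    (Z : Matrix (Fin m) (Fin N) ℝ) : sumSq (Z * W) ≤ sumSq Z := by
  have h : sumSq (Z * W) = sumSq (Wᵀ * Zᵀ) := by
    rw [← sumSq_transpose (Z * W), Matrix.transpose_mul]
  rw [h, ← sumSq_transpose Z]
  exact proj_left W hW Zᵀ

/-- Frobenius inner product as trace. -/
lemma ip_eq_trace {m n : ℕ} (S C : Matrix (Fin m) (Fin n) ℝ) :
    Matrix.trace (Sᵀ * C) = ∑ j, ∑ i, S i j * C i j := by
  simp only [Matrix.trace, Matrix.diag, Matrix.mul_apply, Matrix.transpose_apply]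

/-- Cauchy–Schwarz for the Frobenius inner product. -/
lemma ip_le {m n : ℕ} (S C : Matrix (Fin m) (Fin n) ℝ) :
    Matrix.trace (Sᵀ * C) ≤ frobNorm S * frobNorm C := by
  rw [ip_eq_trace, frobNorm_eq, frobNorm_eq]
  have h := Real.sum_mul_le_sqrt_mul_sqrt (Finset.univ : Finset (Fin n × Fin m))
    (fun p => S p.2 p.1) (fun p => C p.2 p.1)
  simpa [Fintype.sum_prod_type, sumSq, Finset.sum_comm (γ := Fin m)] using h
  
/-- Core estimate: any solution of the Sylvester equation satisfies
`sumSq S ≤ trace (Sᵀ * C)`. -/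
lemma core {r : ℕ} (A B : Matrix (Fin r) (Fin r) ℝ)
    (hA : ∀ x : Fin r → ℝ, x ⬝ᵥ A.mulVec x ≤ 0)
    (hB : ∀ x : Fin r → ℝ, x ⬝ᵥ B.mulVec x ≤ 0)
    (Δt : ℝ) (hΔt : 0 ≤ Δt) (S C : Matrix (Fin r) (Fin r) ℝ)
    (h : (1 - Δt • A) * S - S * (Δt • B) = C) :
    sumSq S ≤ Matrix.trace (Sᵀ * C) := by
  have expand : Matrix.trace (Sᵀ * C)
      = Matrix.trace (Sᵀ * S) - Δt * Matrix.trace (Sᵀ * (A * S))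
        - Δt * Matrix.trace (Sᵀ * (S * B)) := by
    rw [← h]
    simp only [Matrix.sub_mul, Matrix.smul_mul, Matrix.one_mul, Matrix.mul_smul,
      Matrix.mul_sub, Matrix.trace_sub, Matrix.trace_smul, smul_eq_mul]
  have h1 := trace_quad_left A hA S
  have h2 := trace_quad_right B hB S
  have := sumSq_eq_trace S
  nlinarith [mul_nonneg hΔt (neg_nonneg.mpr h1), mul_nonneg hΔt (neg_nonneg.mpr h2)]

lemma frobNorm_nonneg {m n : Type*} [Fintype m] [Fintype n] (M : Matrix m n ℝ) :
    0 ≤ frobNorm M := Real.sqrt_nonneg _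

/-- Norm bound for solutions. -/
lemma norm_bound {r : ℕ} (A B : Matrix (Fin r) (Fin r) ℝ)
    (hA : ∀ x : Fin r → ℝ, x ⬝ᵥ A.mulVec x ≤ 0)
    (hB : ∀ x : Fin r → ℝ, x ⬝ᵥ B.mulVec x ≤ 0)
    (Δt : ℝ) (hΔt : 0 ≤ Δt) (S C : Matrix (Fin r) (Fin r) ℝ)
    (h : (1 - Δt • A) * S - S * (Δt • B) = C) :
    frobNorm S ≤ frobNorm C := by
  have h1 : sumSq S ≤ Matrix.trace (Sᵀ * C) := core A B hA hB Δt hΔt S C h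
  have h2 : Matrix.trace (Sᵀ * C) ≤ frobNorm S * frobNorm C := ip_le S C
  have h3 : frobNorm S ^ 2 = sumSq S := Real.sq_sqrt (sumSq_nonneg S)
  rcases eq_or_lt_of_le (frobNorm_nonneg S) with h0 | h0
  · rw [← h0]; exact frobNorm_nonneg C
  · have : frobNorm S * frobNorm S ≤ frobNorm S * frobNorm C := by nlinarith
    exact le_of_mul_le_mul_left this h0

/-- the Sylvester operator as a linear map -/
def sylv {r : ℕ} (A B : Matrix (Fin r) (Fin r) ℝ) (Δt : ℝ) :
    Matrix (Fin r) (Fin r) ℝ →ₗ[ℝ] Matrix (Fin r) (Fin r) ℝ where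
  toFun S := (1 - Δt • A) * S - S * (Δt • B)
  map_add' S T := by
    simp only [Matrix.mul_add, Matrix.add_mul]
    abel
  map_smul' c S := by
    simp only [RingHom.id_apply, mul_smul_comm, smul_mul_assoc, smul_sub]
    rw [smul_comm Δt c]

lemma sylv_apply {r : ℕ} (A B : Matrix (Fin r) (Fin r) ℝ) (Δt : ℝ)
    (S : Matrix (Fin r) (Fin r) ℝ) :
    sylv A B Δt S = (1 - Δt • A) * S - S * (Δt • B) := rfl

lemma sylv_injective {r : ℕ} (A B : Matrix (Fin r) (Fin r) ℝ)
    (hA : ∀ x : Fin r → ℝ, x ⬝ᵥ A.mulVec x ≤ 0)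
    (hB : ∀ x : Fin r → ℝ, x ⬝ᵥ B.mulVec x ≤ 0)
    (Δt : ℝ) (hΔt : 0 ≤ Δt) : Function.Injective (sylv A B Δt) := by
  rw [injective_iff_map_eq_zero]
  intro S hS
  have h : frobNorm S ≤ frobNorm (0 : Matrix (Fin r) (Fin r) ℝ) :=
    norm_bound A B hA hB Δt hΔt S 0 hS
  have h0 : frobNorm (0 : Matrix (Fin r) (Fin r) ℝ) = 0 := by
    simp [frobNorm]
  have hfn : frobNorm S = 0 := le_antisymm (h.trans_eq h0) (frobNorm_nonneg S)
  have hsq : sumSq S = 0 := by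
    have := Real.sq_sqrt (sumSq_nonneg S)
    rw [← frobNorm_eq] at this
    rw [← this, hfn]; ring
  ext i j
  have hrow : ∀ i ∈ (Finset.univ : Finset (Fin r)), (∑ j, (S i j)^2) = 0 := by
    rw [← Finset.sum_eq_zero_iff_of_nonneg
      (fun i _ => Finset.sum_nonneg fun j _ => sq_nonneg (S i j))]
    exact hsq
  have hij : (S i j)^2 = 0 := by
    have := (Finset.sum_eq_zero_iff_of_nonneg (fun j _ => sq_nonneg (S i j))).mp
      (hrow i (Finset.mem_univ i)) j (Finset.mem_univ j)
    exact this
  simpa using pow_eq_zero_iff (n := 2) (by norm_num) |>.mp hij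

end FrobAux

theorem stmt_4 {N r : ℕ} (Fx Fy : Matrix (Fin N) (Fin N) ℝ)
    (hFxsymm : Fx.IsSymm) (hFysymm : Fy.IsSymm)
    (hFx : ∀ x : Fin N → ℝ, x ⬝ᵥ Fx.mulVec x ≤ 0)
    (hFy : ∀ x : Fin N → ℝ, x ⬝ᵥ Fy.mulVec x ≤ 0)
    (Vx Vy : Matrix (Fin N) (Fin r) ℝ)
    (hVx : Vxᵀ * Vx = 1) (hVy : Vyᵀ * Vy = 1)
    (Δt : ℝ) (hΔt : 0 < Δt) (Un : Matrix (Fin N) (Fin N) ℝ) :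
    (∃! S : Matrix (Fin r) (Fin r) ℝ,
        (1 - Δt • (Vxᵀ * Fx * Vx)) * S - S * (Δt • (Vyᵀ * Fy * Vy)) = Vxᵀ * Un * Vy) ∧
      ∀ S : Matrix (Fin r) (Fin r) ℝ,
        (1 - Δt • (Vxᵀ * Fx * Vx)) * S - S * (Δt • (Vyᵀ * Fy * Vy)) = Vxᵀ * Un * Vy →
          frobNorm S ≤ frobNorm Un := by
  classical
  set A := Vxᵀ * Fx * Vx with hA
  set B := Vyᵀ * Fy * Vy with hB
  have hAq : ∀ x : Fin r → ℝ, x ⬝ᵥ A.mulVec x ≤ 0 := FrobAux.quad_transfer Fx hFx Vx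
  have hBq : ∀ x : Fin r → ℝ, x ⬝ᵥ B.mulVec x ≤ 0 := FrobAux.quad_transfer Fy hFy Vy
  have hΔt' : (0:ℝ) ≤ Δt := le_of_lt hΔt
  have hinj : Function.Injective (FrobAux.sylv A B Δt) :=
    FrobAux.sylv_injective A B hAq hBq Δt hΔt'
  have hsurj : Function.Surjective (FrobAux.sylv A B Δt) :=
    (LinearMap.injective_iff_surjective).mp hinj
  constructor
  · obtain ⟨S, hS⟩ := hsurj (Vxᵀ * Un * Vy)
    rw [FrobAux.sylv_apply] at hS
    refine ⟨S, hS, ?_⟩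
    intro T hT
    apply hinj
    rw [FrobAux.sylv_apply, FrobAux.sylv_apply, hT, hS]
  · intro S hS
    have hbound : frobNorm S ≤ frobNorm (Vxᵀ * Un * Vy) :=
      FrobAux.norm_bound A B hAq hBq Δt hΔt' S _ hS
    have h1 : FrobAux.sumSq (Vxᵀ * Un * Vy) ≤ FrobAux.sumSq Un := by
      calc FrobAux.sumSq (Vxᵀ * Un * Vy) = FrobAux.sumSq (Vxᵀ * (Un * Vy)) := by
            rw [Matrix.mul_assoc]
        _ ≤ FrobAux.sumSq (Un * Vy) := FrobAux.proj_left Vx hVx _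
        _ ≤ FrobAux.sumSq Un := FrobAux.proj_right Vy hVy _
    have : frobNorm (Vxᵀ * Un * Vy) ≤ frobNorm Un := by
      rw [FrobAux.frobNorm_eq, FrobAux.frobNorm_eq]
      exact Real.sqrt_le_sqrt h1
    linarith
end

section
/- Suppose U^{n+1} solves the backward Euler matrix equation U^{n+1} = U^n + Δt(F_x U^{n+1} + U^{n+1} F_yᵀ), where F_x and F_y are symmetric negative semi-definite. Then ‖U^{n+1}‖_F ≤ ‖U^n‖_F. -/
open Matrix

theorem stmt_9 {N : ℕ} (Fx Fy : Matrix (Fin N) (Fin N) ℝ)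
    (hFxsymm : Fx.IsSymm) (hFysymm : Fy.IsSymm)
    (hFx : ∀ x : Fin N → ℝ, x ⬝ᵥ Fx.mulVec x ≤ 0)
    (hFy : ∀ x : Fin N → ℝ, x ⬝ᵥ Fy.mulVec x ≤ 0)
    (Δt : ℝ) (hΔt : 0 < Δt) (Un Unp1 : Matrix (Fin N) (Fin N) ℝ)
    (hBE : Unp1 = Un + Δt • (Fx * Unp1 + Unp1 * Fyᵀ)) :
    frobNorm Unp1 ≤ frobNorm Un := by
  have hentry : ∀ i j, Unp1 i j = Un i j
      + Δt * ((∑ k, Fx i k * Unp1 k j) + (∑ k, Unp1 i k * Fy j k)) := by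
    intro i j
    conv_lhs => rw [hBE]
    simp [Matrix.add_apply, Matrix.smul_apply, Matrix.mul_apply, Matrix.transpose_apply, mul_add]
  set a : ℝ := ∑ i, ∑ j, (Unp1 i j) ^ 2 with ha_def
  set b : ℝ := ∑ i, ∑ j, (Un i j) ^ 2 with hb_def
  have hX : (∑ i, ∑ j, (∑ k, Fx i k * Unp1 k j) * Unp1 i j) ≤ 0 := by
    rw [Finset.sum_comm]
    apply Finset.sum_nonpos
    intro j _
    have := hFx (fun i => Unp1 i j)
    simpa [dotProduct, Matrix.mulVec, Finset.mul_sum, mul_comm, mul_left_comm] using this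
  have hY : (∑ i, ∑ j, (∑ k, Unp1 i k * Fy j k) * Unp1 i j) ≤ 0 := by
    apply Finset.sum_nonpos
    intro i _
    have := hFy (fun j => Unp1 i j)
    simp only [dotProduct, Matrix.mulVec] at this
    calc (∑ j, (∑ k, Unp1 i k * Fy j k) * Unp1 i j)
        = ∑ j, Unp1 i j * ∑ k, Fy j k * Unp1 i k := by
          apply Finset.sum_congr rfl; intro j _
          rw [Finset.sum_mul, Finset.mul_sum]
          apply Finset.sum_congr rfl; intro k _; ring
      _ ≤ 0 := this
  have key : a = (∑ i, ∑ j, Un i j * Unp1 i j)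
      + Δt * ((∑ i, ∑ j, (∑ k, Fx i k * Unp1 k j) * Unp1 i j)
            + (∑ i, ∑ j, (∑ k, Unp1 i k * Fy j k) * Unp1 i j)) := by
    have h : ∀ i j, (Unp1 i j) ^ 2 = Un i j * Unp1 i j
        + Δt * ((∑ k, Fx i k * Unp1 k j) * Unp1 i j + (∑ k, Unp1 i k * Fy j k) * Unp1 i j) := by
      intro i j
      rw [sq]
      nth_rewrite 2 [hentry i j]
      ring
    rw [ha_def]
    simp only [h, mul_add, Finset.sum_add_distrib, Finset.mul_sum]
  have hCS : (∑ i, ∑ j, Un i j * Unp1 i j) ≤ Real.sqrt b * Real.sqrt a := by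
    have := Real.sum_mul_le_sqrt_mul_sqrt (Finset.univ ×ˢ Finset.univ)
      (fun p : Fin N × Fin N => Un p.1 p.2) (fun p => Unp1 p.1 p.2)
    simpa [← Finset.univ_product_univ, Finset.sum_product, ha_def, hb_def] using this
  have ha0 : 0 ≤ a := Finset.sum_nonneg fun i _ => Finset.sum_nonneg fun j _ => sq_nonneg _
  have hb0 : 0 ≤ b := Finset.sum_nonneg fun i _ => Finset.sum_nonneg fun j _ => sq_nonneg _
  have hale : a ≤ Real.sqrt b * Real.sqrt a := by nlinarith [key, hCS, hX, hY, hΔt.le]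
  have hsq : Real.sqrt a * Real.sqrt a = a := Real.mul_self_sqrt ha0
  have : Real.sqrt a ≤ Real.sqrt b := by
    rcases eq_or_lt_of_le (Real.sqrt_nonneg a) with h | h
    · rw [← h]; exact Real.sqrt_nonneg b
    · nlinarith
  simpa [frobNorm, ha_def, hb_def] using this
end

section
/- If F_x and F_y are symmetric negative semi-definite N×N matrices and Δt > 0, then for every U^n ∈ ℝ^{N×N} the backward Euler equation (I - Δt F_x) U - U (Δt F_yᵀ) = U^n has a unique solution U ∈ ℝ^{N×N}. -/
/-!
If `(1 - A) U = U Bᵀ`, then `U = A U + U Bᵀ`, and pairing with `U` in the Frobenius inner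
product gives `tr (Uᵀ U) = tr (Uᵀ A U) + tr (Uᵀ U Bᵀ)`. The two terms on the right are sums of
values of the quadratic forms of `A` (on the columns of `U`) and of `B` (on its rows), so they
are `≤ 0`, forcing `U = 0`. Hence `U ↦ (1 - A) U - U Bᵀ` is an injective endomorphism of a
finite-dimensional space, thus bijective.
-/

open Matrix

namespace Matrix

variable {n m R : Type*} [Fintype n] [Fintype m]

theorem trace_transpose_mul_mul_eq_sum [CommSemiring R] (A : Matrix n n R) (U : Matrix n m R) :
    (Uᵀ * (A * U)).trace = ∑ j, Uᵀ j ⬝ᵥ A *ᵥ Uᵀ j :=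
  rfl

section OrderedRing

variable [CommRing R] [PartialOrder R] [IsOrderedRing R]

theorem trace_transpose_mul_mul_nonpos {A : Matrix n n R} (hA : ∀ x, x ⬝ᵥ A *ᵥ x ≤ 0)
    (U : Matrix n m R) : (Uᵀ * (A * U)).trace ≤ 0 :=
  (trace_transpose_mul_mul_eq_sum A U).trans_le (Finset.sum_nonpos fun _ _ => hA _)

theorem trace_transpose_mul_mul_transpose_nonpos {B : Matrix m m R}
    (hB : ∀ x, x ⬝ᵥ B *ᵥ x ≤ 0) (U : Matrix n m R) : (Uᵀ * (U * Bᵀ)).trace ≤ 0 := by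
  rw [trace_mul_comm, ← trace_transpose, ← transpose_transpose U]
  simpa only [transpose_mul, transpose_transpose, Matrix.mul_assoc]
    using trace_transpose_mul_mul_nonpos hB Uᵀ

end OrderedRing

section LinearOrderedRing

variable [CommRing R] [LinearOrder R] [IsStrictOrderedRing R]

theorem eq_zero_of_trace_transpose_mul_self_nonpos {U : Matrix n m R}
    (hU : (Uᵀ * U).trace ≤ 0) : U = 0 := by
  rw [← vec_dotProduct_vec] at hU
  exact vec_eq_zero_iff.mp <| dotProduct_self_eq_zero.mp <|
    hU.antisymm (Finset.sum_nonneg fun _ _ => mul_self_nonneg _)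

theorem eq_zero_of_eq_mul_add_mul_transpose {A : Matrix n n R} {B : Matrix m m R}
    (hA : ∀ x, x ⬝ᵥ A *ᵥ x ≤ 0) (hB : ∀ x, x ⬝ᵥ B *ᵥ x ≤ 0) {U : Matrix n m R}
    (hU : U = A * U + U * Bᵀ) : U = 0 := by
  refine eq_zero_of_trace_transpose_mul_self_nonpos ?_
  calc (Uᵀ * U).trace = (Uᵀ * (A * U)).trace + (Uᵀ * (U * Bᵀ)).trace := by
        nth_rewrite 2 [hU]
        rw [Matrix.mul_add, trace_add]
    _ ≤ 0 := add_nonpos (trace_transpose_mul_mul_nonpos hA U)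
        (trace_transpose_mul_mul_transpose_nonpos hB U)

end LinearOrderedRing

theorem existsUnique_one_sub_mul_sub_mul_transpose_eq [Field R] [LinearOrder R]
    [IsStrictOrderedRing R] [DecidableEq n] {A : Matrix n n R} {B : Matrix m m R}
    (hA : ∀ x, x ⬝ᵥ A *ᵥ x ≤ 0) (hB : ∀ x, x ⬝ᵥ B *ᵥ x ≤ 0) (C : Matrix n m R) :
    ∃! U : Matrix n m R, (1 - A) * U - U * Bᵀ = C := by
  let f := mulLeftLinearMap m R (1 - A) - mulRightLinearMap n R Bᵀ
  have hf : Function.Injective f := by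
    refine LinearMap.ker_eq_bot.mp (LinearMap.ker_eq_bot'.mpr fun U hU => ?_)
    refine eq_zero_of_eq_mul_add_mul_transpose hA hB ?_
    have hU : (1 - A) * U - U * Bᵀ = 0 := hU
    rwa [Matrix.sub_mul, Matrix.one_mul, sub_sub, sub_eq_zero] at hU
  exact Function.Bijective.existsUnique ⟨hf, LinearMap.injective_iff_surjective.mp hf⟩ C

end Matrix

theorem stmt_10_general {N : ℕ} (Fx Fy : Matrix (Fin N) (Fin N) ℝ)
    (hFx : ∀ x : Fin N → ℝ, x ⬝ᵥ Fx.mulVec x ≤ 0)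
    (hFy : ∀ x : Fin N → ℝ, x ⬝ᵥ Fy.mulVec x ≤ 0)
    (Δt : ℝ) (hΔt : 0 < Δt) (Un : Matrix (Fin N) (Fin N) ℝ) :
    ∃! U : Matrix (Fin N) (Fin N) ℝ, (1 - Δt • Fx) * U - U * (Δt • Fyᵀ) = Un := by
  have scaled {F : Matrix (Fin N) (Fin N) ℝ} (hF : ∀ x : Fin N → ℝ, x ⬝ᵥ F *ᵥ x ≤ 0)
      (x : Fin N → ℝ) : x ⬝ᵥ (Δt • F) *ᵥ x ≤ 0 := by
    rw [smul_mulVec, dotProduct_smul, smul_eq_mul]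
    exact mul_nonpos_of_nonneg_of_nonpos hΔt.le (hF x)
  rw [← transpose_smul]
  exact existsUnique_one_sub_mul_sub_mul_transpose_eq (scaled hFx) (scaled hFy) Un

theorem stmt_10 {N : ℕ} (Fx Fy : Matrix (Fin N) (Fin N) ℝ)
    (hFxsymm : Fx.IsSymm) (hFysymm : Fy.IsSymm)
    (hFx : ∀ x : Fin N → ℝ, x ⬝ᵥ Fx.mulVec x ≤ 0)
    (hFy : ∀ x : Fin N → ℝ, x ⬝ᵥ Fy.mulVec x ≤ 0)
    (Δt : ℝ) (hΔt : 0 < Δt) (Un : Matrix (Fin N) (Fin N) ℝ) :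
    ∃! U : Matrix (Fin N) (Fin N) ℝ, (1 - Δt • Fx) * U - U * (Δt • Fyᵀ) = Un :=
  stmt_10_general Fx Fy hFx hFy Δt hΔt Un
end
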